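/- Let k ≥ 2 and a be integers with k ∤ a, and let f : ℝ → ℂ be continuously differentiable on [0,1]. Then ∑_{j=1}^{k} e^{2πiaj/k} f(j/k) = (f(1) − f(0)) · (1 + ∑_{q=0}^{k−1} (q/k) e^{2πiaq/k}) + ∫_0^1 C̃_{1,k}(x;a) f'(x) dx. -/

import Mathlib

open scoped BigOperators

/-- The periodic Bernoulli function of degree 1: `B̃_1(x) = (x − ⌊x⌋) − 1/2`. -/
noncomputable def Bper1 (x : ℝ) : ℂ := ((Int.fract x : ℝ) : ℂ) - 1 / 2

/-- `C̃_{1,k}(x;a) = ∑_{l=0}^{k−1} B̃_1(x − l/k) e^{2πial/k}`. -/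
noncomputable def Cper1 (k : ℕ) (a : ℤ) (x : ℝ) : ℂ :=
  ∑ l ∈ Finset.range k,
    Bper1 (x - (l : ℝ) / k) * Complex.exp (2 * (Real.pi : ℂ) * Complex.I * a * l / k)



open MeasureTheory Complex Set

-- FTC on subinterval
lemma ftc_aux {f F : ℝ → ℂ} (hfc : ContinuousOn f (Icc 0 1))
    (hFc : ContinuousOn F (Icc 0 1))
    (hd : ∀ x ∈ Ioo (0:ℝ) 1, HasDerivAt f (F x) x)
    {u v : ℝ} (h0u : 0 ≤ u) (huv : u ≤ v) (hv1 : v ≤ 1) :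
    ∫ x in u..v, F x = f v - f u := by
  have hsub : Icc u v ⊆ Icc 0 1 := Icc_subset_Icc h0u hv1
  refine intervalIntegral.integral_eq_sub_of_hasDeriv_right_of_le huv (hfc.mono hsub)
    (fun x hx => ?_) ((hFc.mono hsub).intervalIntegrable_of_Icc huv)
  exact (hd x ⟨lt_of_le_of_lt h0u hx.1, lt_of_lt_of_le hx.2 hv1⟩).hasDerivWithinAt

lemma parts_aux {f F : ℝ → ℂ} (hfc : ContinuousOn f (Icc 0 1))
    (hFc : ContinuousOn F (Icc 0 1))
    (hd : ∀ x ∈ Ioo (0:ℝ) 1, HasDerivAt f (F x) x)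
    {u v : ℝ} (h0u : 0 ≤ u) (huv : u ≤ v) (hv1 : v ≤ 1) (d : ℝ) :
    ∫ x in u..v, ((x : ℂ) - (d : ℂ)) * F x
      = (((v : ℂ) - d) * f v - ((u : ℂ) - d) * f u) - ∫ x in u..v, f x := by
  have hsub : Icc u v ⊆ Icc 0 1 := Icc_subset_Icc h0u hv1
  have hcoef : Continuous fun x : ℝ => ((x : ℂ) - (d : ℂ)) :=
    (Complex.continuous_ofReal).sub continuous_const
  have hint1 : IntervalIntegrable (fun x => ((x:ℂ) - d) * F x) volume u v :=
    ((hcoef.continuousOn.mul (hFc.mono hsub))).intervalIntegrable_of_Icc huv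
  have hint2 : IntervalIntegrable f volume u v := (hfc.mono hsub).intervalIntegrable_of_Icc huv
  have key : ∫ x in u..v, (f x + ((x:ℂ) - d) * F x)
      = ((v : ℂ) - d) * f v - ((u : ℂ) - d) * f u := by
    refine intervalIntegral.integral_eq_sub_of_hasDeriv_right_of_le huv
      ((hcoef.continuousOn.mul (hfc.mono hsub))) (fun x hx => ?_) (hint2.add hint1)
    have hx' : HasDerivAt f (F x) x :=
      hd x ⟨lt_of_le_of_lt h0u hx.1, lt_of_lt_of_le hx.2 hv1⟩
    have hc : HasDerivAt (fun x : ℝ => ((x : ℂ) - (d:ℂ))) 1 x := by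
      simpa using (Complex.ofRealCLM.hasDerivAt (x := x)).sub_const (d : ℂ)
    have := hc.mul hx'
    simp only [one_mul] at this
    exact this.hasDerivWithinAt
  have := intervalIntegral.integral_add hint2 hint1
  rw [key] at this
  rw [this]; ring

lemma bper_int {f F : ℝ → ℂ} (hfc : ContinuousOn f (Icc 0 1))
    (hFc : ContinuousOn F (Icc 0 1))
    (hd : ∀ x ∈ Ioo (0:ℝ) 1, HasDerivAt f (F x) x)
    {c : ℝ} (hc0 : 0 ≤ c) (hc1 : c < 1) :
    IntervalIntegrable (fun x => Bper1 (x - c) * F x) volume 0 1 ∧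
    ∫ x in (0:ℝ)..1, Bper1 (x - c) * F x
      = f c + ((1:ℂ)/2 - (c:ℂ)) * (f 1 - f 0) - ∫ x in (0:ℝ)..1, f x := by
  have hc1' : c ≤ 1 := hc1.le
  have hae : ∀ᵐ x : ℝ, x ∉ ({c, 1} : Set ℝ) :=
    (Set.toFinite ({c, 1} : Set ℝ)).countable.ae_notMem volume
  have eq1 : ∀ x : ℝ, x ∉ ({c, 1} : Set ℝ) → x ∈ Ioc 0 c →
      ((x:ℂ) - ((c - 1/2 : ℝ):ℂ)) * F x = Bper1 (x - c) * F x := by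
    intro x hx hx2
    have hxc : x < c := lt_of_le_of_ne hx2.2 (fun h => hx (Or.inl h))
    have hfl : ⌊x - c⌋ = -1 := by
      rw [Int.floor_eq_iff]
      constructor <;> push_cast <;> linarith [hx2.1]
    have hfr : Int.fract (x - c) = x - c + 1 := by
      rw [Int.fract, hfl]; push_cast; ring
    rw [Bper1, hfr]; push_cast; ring
  have eq2 : ∀ x : ℝ, x ∉ ({c, 1} : Set ℝ) → x ∈ Ioc c 1 →
      ((x:ℂ) - ((c + 1/2 : ℝ):ℂ)) * F x = Bper1 (x - c) * F x := by
    intro x hx hx2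
    have hx1 : x < 1 := lt_of_le_of_ne hx2.2 (fun h => hx (Or.inr h))
    have hfr : Int.fract (x - c) = x - c :=
      Int.fract_eq_self.mpr ⟨by linarith [hx2.1], by linarith⟩
    rw [Bper1, hfr]; push_cast; ring
  have hcont1 : ContinuousOn (fun x : ℝ => ((x:ℂ) - ((c - 1/2 : ℝ):ℂ)) * F x) (Icc 0 c) :=
    ((Complex.continuous_ofReal.sub continuous_const).continuousOn).mul
      (hFc.mono (Icc_subset_Icc le_rfl hc1'))
  have hcont2 : ContinuousOn (fun x : ℝ => ((x:ℂ) - ((c + 1/2 : ℝ):ℂ)) * F x) (Icc c 1) :=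
    ((Complex.continuous_ofReal.sub continuous_const).continuousOn).mul
      (hFc.mono (Icc_subset_Icc hc0 le_rfl))
  have h1ae : (fun x : ℝ => ((x:ℂ) - ((c - 1/2 : ℝ):ℂ)) * F x)
      =ᵐ[volume.restrict (Set.uIoc (0:ℝ) c)] (fun x => Bper1 (x - c) * F x) := by
    rw [Set.uIoc_of_le hc0]
    filter_upwards [ae_restrict_of_ae hae, ae_restrict_mem measurableSet_Ioc] with x hx hx2
    exact eq1 x hx hx2
  have h2ae : (fun x : ℝ => ((x:ℂ) - ((c + 1/2 : ℝ):ℂ)) * F x)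
      =ᵐ[volume.restrict (Set.uIoc c 1)] (fun x => Bper1 (x - c) * F x) := by
    rw [Set.uIoc_of_le hc1']
    filter_upwards [ae_restrict_of_ae hae, ae_restrict_mem measurableSet_Ioc] with x hx hx2
    exact eq2 x hx hx2
  have int1 : IntervalIntegrable (fun x => Bper1 (x - c) * F x) volume 0 c :=
    (hcont1.intervalIntegrable_of_Icc hc0).congr_ae h1ae
  have int2 : IntervalIntegrable (fun x => Bper1 (x - c) * F x) volume c 1 :=
    (hcont2.intervalIntegrable_of_Icc hc1').congr_ae h2ae
  refine ⟨int1.trans int2, ?_⟩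
  have hsplit := intervalIntegral.integral_add_adjacent_intervals int1 int2
  have hv1 : ∫ x in (0:ℝ)..c, Bper1 (x - c) * F x
      = ∫ x in (0:ℝ)..c, ((x:ℂ) - ((c - 1/2 : ℝ):ℂ)) * F x := by
    symm
    apply intervalIntegral.integral_congr_ae
    filter_upwards [hae] with x hx hx2
    exact eq1 x hx (by rwa [Set.uIoc_of_le hc0] at hx2)
  have hv2 : ∫ x in c..(1:ℝ), Bper1 (x - c) * F x
      = ∫ x in c..(1:ℝ), ((x:ℂ) - ((c + 1/2 : ℝ):ℂ)) * F x := by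
    symm
    apply intervalIntegral.integral_congr_ae
    filter_upwards [hae] with x hx hx2
    exact eq2 x hx (by rwa [Set.uIoc_of_le hc1'] at hx2)
  have hp1 := parts_aux hfc hFc hd le_rfl hc0 hc1' (c - 1/2)
  have hp2 := parts_aux hfc hFc hd hc0 hc1' le_rfl (c + 1/2)
  have hfint : ∀ u v : ℝ, 0 ≤ u → u ≤ v → v ≤ 1 → IntervalIntegrable f volume u v :=
    fun u v h1 h2 h3 => (hfc.mono (Icc_subset_Icc h1 h3)).intervalIntegrable_of_Icc h2
  have hfsplit := intervalIntegral.integral_add_adjacent_intervals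
    (hfint 0 c le_rfl hc0 hc1') (hfint c 1 hc0 hc1' le_rfl)
  rw [← hsplit, hv1, hv2, hp1, hp2, ← hfsplit]
  push_cast
  ring

lemma exp_sum_zero (k : ℕ) (hk : 2 ≤ k) (a : ℤ) (hka : ¬ (k : ℤ) ∣ a) :
    ∑ l ∈ Finset.range k,
      Complex.exp (2 * (Real.pi : ℂ) * Complex.I * a * l / k) = 0 := by
  have hk0 : (k : ℂ) ≠ 0 := Nat.cast_ne_zero.mpr (by omega)
  have hne : (2 * (Real.pi : ℂ) * Complex.I) ≠ 0 := by
    simp [Real.pi_ne_zero, Complex.I_ne_zero, Complex.ofReal_ne_zero]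
  set z := Complex.exp (2 * (Real.pi : ℂ) * Complex.I * a / k) with hz
  have hterm : ∀ l : ℕ,
      Complex.exp (2 * (Real.pi : ℂ) * Complex.I * a * l / k) = z ^ l := by
    intro l
    rw [hz, ← Complex.exp_nat_mul]
    congr 1
    ring
  have hz1 : z ≠ 1 := by
    intro h
    rw [hz, Complex.exp_eq_one_iff] at h
    obtain ⟨n, hn⟩ := h
    apply hka
    refine ⟨n, ?_⟩
    have h2 : (2 * (Real.pi : ℂ) * Complex.I) * (a : ℂ)
        = (2 * (Real.pi : ℂ) * Complex.I) * ((k : ℂ) * n) := by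
      field_simp at hn
      linear_combination (2 * (Real.pi : ℂ) * Complex.I) * hn
    have h3 : (a : ℂ) = (k : ℂ) * n := mul_left_cancel₀ hne h2
    exact_mod_cast h3
  have hzk : z ^ k = 1 := by
    rw [hz, ← Complex.exp_nat_mul]
    have : (k : ℂ) * (2 * (Real.pi : ℂ) * Complex.I * a / k) = a * (2 * Real.pi * Complex.I) := by
      field_simp
    rw [this, Complex.exp_int_mul_two_pi_mul_I]
  calc ∑ l ∈ Finset.range k, Complex.exp (2 * (Real.pi : ℂ) * Complex.I * a * l / k)
      = ∑ l ∈ Finset.range k, z ^ l := by exact Finset.sum_congr rfl fun l _ => hterm l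
    _ = (z ^ k - 1) / (z - 1) := geom_sum_eq hz1 k
    _ = 0 := by rw [hzk]; simp

/-- For `f` continuously differentiable on `[0,1]`:
`∑_{j=1}^{k} e^{2πiaj/k} f(j/k)
  = (f(1) − f(0))·(1 + ∑_{q=0}^{k−1} (q/k) e^{2πiaq/k}) + ∫_0^1 C̃_{1,k}(x;a) f'(x) dx`. -/
theorem statement11 (k : ℕ) (hk : 2 ≤ k) (a : ℤ) (hka : ¬ (k : ℤ) ∣ a)
    (f : ℝ → ℂ) (hf : ContDiffOn ℝ 1 f (Set.Icc (0 : ℝ) 1)) :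
    (∑ j ∈ Finset.Icc 1 k,
        Complex.exp (2 * (Real.pi : ℂ) * Complex.I * a * j / k) * f ((j : ℝ) / k)) =
      (f 1 - f 0) *
          (1 + ∑ q ∈ Finset.range k,
              ((q : ℂ) / k) * Complex.exp (2 * (Real.pi : ℂ) * Complex.I * a * q / k)) +
        ∫ x in (0 : ℝ)..1, Cper1 k a x * derivWithin f (Set.Icc (0 : ℝ) 1) x := by
  have hkpos : 0 < k := by omega
  have hk0R : (k : ℝ) ≠ 0 := Nat.cast_ne_zero.mpr (by omega)
  set E : ℕ → ℂ := fun l => Complex.exp (2 * (Real.pi : ℂ) * Complex.I * a * l / k) with hE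
  set F : ℝ → ℂ := derivWithin f (Set.Icc (0 : ℝ) 1) with hF
  have hfc : ContinuousOn f (Icc 0 1) := hf.continuousOn
  have hFc : ContinuousOn F (Icc 0 1) :=
    hf.continuousOn_derivWithin (uniqueDiffOn_Icc zero_lt_one) le_rfl
  have hd : ∀ x ∈ Ioo (0:ℝ) 1, HasDerivAt f (F x) x := by
    intro x hx
    exact ((hf.differentiableOn one_ne_zero x (Ioo_subset_Icc_self hx)).hasDerivWithinAt).hasDerivAt
      (Icc_mem_nhds hx.1 hx.2)
  have hB : ∀ l ∈ Finset.range k,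
      IntervalIntegrable (fun x => Bper1 (x - (l:ℝ)/k) * F x) volume 0 1 ∧
      ∫ x in (0:ℝ)..1, Bper1 (x - (l:ℝ)/k) * F x
        = f ((l:ℝ)/k) + ((1:ℂ)/2 - (((l:ℝ)/k : ℝ):ℂ)) * (f 1 - f 0)
          - ∫ x in (0:ℝ)..1, f x := by
    intro l hl
    have hlk : (l : ℝ) < k := Nat.cast_lt.mpr (Finset.mem_range.mp hl)
    exact bper_int hfc hFc hd (div_nonneg (Nat.cast_nonneg l) (Nat.cast_nonneg k))
      ((div_lt_one (by positivity)).mpr hlk)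
  set J : ℂ := ∫ x in (0:ℝ)..1, f x with hJ
  have hsum0 : ∑ l ∈ Finset.range k, E l = 0 := exp_sum_zero k hk a hka
  set S : ℂ := ∑ q ∈ Finset.range k, ((q : ℂ) / k) * E q with hS
  have hint : ∫ x in (0:ℝ)..1, Cper1 k a x * F x
      = ∑ l ∈ Finset.range k, E l * ∫ x in (0:ℝ)..1, Bper1 (x - (l:ℝ)/k) * F x := by
    have h1 : ∀ x : ℝ, Cper1 k a x * F x
        = ∑ l ∈ Finset.range k, E l * (Bper1 (x - (l:ℝ)/k) * F x) := by
      intro x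
      rw [Cper1, Finset.sum_mul]
      exact Finset.sum_congr rfl fun l _ => by rw [hE]; ring
    simp only [h1]
    rw [intervalIntegral.integral_finset_sum]
    · exact Finset.sum_congr rfl fun l _ => intervalIntegral.integral_const_mul _ _
    · exact fun l hl => ((hB l hl).1).const_mul (E l)
  have hcast : ∀ l : ℕ, (((l:ℝ)/k : ℝ):ℂ) = (l : ℂ) / k := by
    intro l; push_cast; ring
  have hint2 : ∫ x in (0:ℝ)..1, Cper1 k a x * F x
      = (∑ l ∈ Finset.range k, E l * f ((l:ℝ)/k)) - (f 1 - f 0) * S := by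
    rw [hint]
    have h2 : ∀ l ∈ Finset.range k,
        E l * ∫ x in (0:ℝ)..1, Bper1 (x - (l:ℝ)/k) * F x
        = E l * f ((l:ℝ)/k) - (f 1 - f 0) * (((l:ℂ)/k) * E l)
          + ((1:ℂ)/2 * (f 1 - f 0) - J) * E l := by
      intro l hl
      rw [(hB l hl).2, hcast l]
      ring
    rw [Finset.sum_congr rfl h2, Finset.sum_add_distrib, Finset.sum_sub_distrib,
      ← Finset.mul_sum, ← Finset.mul_sum, hsum0, mul_zero, add_zero, hS]
  have hE0 : E 0 = 1 := by rw [hE]; simp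
  have hEk : E k = 1 := by
    simp only [hE]
    have : 2 * (Real.pi : ℂ) * Complex.I * a * k / k = a * (2 * Real.pi * Complex.I) := by
      have : (k : ℂ) ≠ 0 := Nat.cast_ne_zero.mpr (by omega)
      field_simp
    rw [this, Complex.exp_int_mul_two_pi_mul_I]
  have hLHS : (∑ j ∈ Finset.Icc 1 k, E j * f ((j : ℝ) / k))
      = (∑ l ∈ Finset.range k, E l * f ((l:ℝ)/k)) + f 1 - f 0 := by
    have hins : Finset.range (k+1) = insert 0 (Finset.Icc 1 k) := by
      ext j
      simp only [Finset.mem_range, Finset.mem_insert, Finset.mem_Icc]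
      omega
    have h0 : (0 : ℕ) ∉ Finset.Icc 1 k := by simp
    have hA := Finset.sum_range_succ (fun j => E j * f ((j : ℝ) / k)) k
    rw [hins, Finset.sum_insert h0] at hA
    simp only [Nat.cast_zero, zero_div, hE0, one_mul] at hA
    rw [div_self hk0R, hEk, one_mul] at hA
    -- hA : E 0 term... : f 0 + ∑_{Icc} = ∑_{range k} + f 1
    linear_combination hA
  calc (∑ j ∈ Finset.Icc 1 k, E j * f ((j : ℝ) / k))
      = (∑ l ∈ Finset.range k, E l * f ((l:ℝ)/k)) + f 1 - f 0 := hLHS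
    _ = (f 1 - f 0) * (1 + S) + ((∑ l ∈ Finset.range k, E l * f ((l:ℝ)/k)) - (f 1 - f 0) * S) := by
        ring
    _ = (f 1 - f 0) * (1 + S) + ∫ x in (0:ℝ)..1, Cper1 k a x * F x := by rw [hint2]
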